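/- arXiv:2007.05202 — 6 statements merged into one kernel-verified Lean document; each statement's English description precedes it below -/
import Mathlib

section
/- For integers n ≥ k ≥ 1, let S(n,k) be the sum over all k-tuples (a_1,...,a_k) of positive integers with a_1+...+a_k = n of the product ∏ 1/a_i. Then S(n,k) ≤ (3·log(n+1))^{k-1} / n. -/
open Finset


private noncomputable def S (n k : ℕ) : ℝ :=
  ∑ a ∈ (Finset.Nat.antidiagonalTuple k n).filter (fun a => ∀ i, 1 ≤ a i),
    ∏ i, (1 : ℝ) / (a i : ℝ)

private lemma S_nonneg (n k : ℕ) : 0 ≤ S n k := by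
  refine Finset.sum_nonneg fun a _ => Finset.prod_nonneg fun i _ => by positivity

private lemma S_one (n : ℕ) (hn : 1 ≤ n) : S n 1 = 1 / n := by
  rw [S, Finset.Nat.antidiagonalTuple_one]
  rw [Finset.filter_singleton]
  simp only [Matrix.cons_val_fin_one]
  rw [if_pos (fun i => hn)]
  simp

private lemma S_eq_zero (n k : ℕ) (h : n < k) : S n k = 0 := by
  rw [S, Finset.filter_false_of_mem, Finset.sum_empty]
  intro a ha hall
  rw [Finset.Nat.mem_antidiagonalTuple] at ha
  have : (k : ℕ) ≤ ∑ i, a i := by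
    calc (k : ℕ) = ∑ _i : Fin k, 1 := by simp
    _ ≤ ∑ i, a i := Finset.sum_le_sum fun i _ => hall i
  omega

private lemma S_rec (n k : ℕ) :
    S n (k + 1) = ∑ j ∈ Finset.Ico 1 (n + 1), (1 / (j : ℝ)) * S (n - j) k := by
  simp only [S, Finset.mul_sum]
  rw [Finset.sum_sigma']
  refine Finset.sum_bij' (fun (a : Fin (k+1) → ℕ) _ => (⟨a 0, Fin.tail a⟩ : Σ _ : ℕ, Fin k → ℕ))
    (fun p _ => Fin.cons p.1 p.2) ?_ ?_ ?_ ?_ ?_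
  · intro a ha
    simp only [Finset.mem_filter, Finset.Nat.mem_antidiagonalTuple] at ha
    obtain ⟨hsum, hall⟩ := ha
    rw [Fin.sum_univ_succ] at hsum
    simp only [Finset.mem_sigma, Finset.mem_Ico, Finset.mem_filter,
      Finset.Nat.mem_antidiagonalTuple]
    refine ⟨⟨hall 0, by omega⟩, ?_, fun i => hall i.succ⟩
    simp only [Fin.tail]
    omega
  · intro p hp
    simp only [Finset.mem_sigma, Finset.mem_Ico, Finset.mem_filter,
      Finset.Nat.mem_antidiagonalTuple] at hp
    obtain ⟨⟨h1, h2⟩, hsum, hall⟩ := hp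
    simp only [Finset.mem_filter, Finset.Nat.mem_antidiagonalTuple]
    constructor
    · rw [Fin.sum_cons]; omega
    · intro i
      refine Fin.cases ?_ ?_ i
      · simpa using h1
      · intro j; simpa using hall j
  · intro a _; exact Fin.cons_self_tail a
  · intro p _; ext <;> simp
  · intro a _
    rw [Fin.prod_univ_succ]
    rfl

private lemma sum_Ico_inv_reflect (n : ℕ) :
    ∑ j ∈ Finset.Ico 1 n, (1 : ℝ) / ((n - j : ℕ) : ℝ)
      = ∑ j ∈ Finset.Ico 1 n, (1 : ℝ) / (j : ℝ) := by
  refine Finset.sum_bij' (fun j _ => n - j) (fun j _ => n - j) ?_ ?_ ?_ ?_ ?_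
  · intro a ha; simp only [Finset.mem_Ico] at ha ⊢; omega
  · intro a ha; simp only [Finset.mem_Ico] at ha ⊢; omega
  · intro a ha; simp only [Finset.mem_Ico] at ha; show n - (n - a) = a; omega
  · intro a ha; simp only [Finset.mem_Ico] at ha; show n - (n - a) = a; omega
  · intro a _; rfl

private lemma sum_Ico_inv_eq_harmonic (n : ℕ) (hn : 1 ≤ n) :
    ∑ j ∈ Finset.Ico 1 n, (1 : ℝ) / (j : ℝ) = (harmonic (n - 1) : ℝ) := by
  obtain ⟨m, rfl⟩ : ∃ m, n = m + 1 := ⟨n - 1, by omega⟩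
  rw [Finset.Ico_add_one_right_eq_Icc, harmonic_eq_sum_Icc]
  push_cast
  simp [one_div]

private lemma exp_two_lt_eight : Real.exp 2 < 8 := by
  have h := Real.exp_one_lt_d9
  have h2 : Real.exp 2 = Real.exp 1 * Real.exp 1 := by
    rw [← Real.exp_add]; norm_num
  nlinarith [Real.exp_pos 1]

private lemma two_harmonic_le (n : ℕ) (hn : 2 ≤ n) :
    2 * ((harmonic (n - 1) : ℝ)) ≤ 3 * Real.log ((n : ℝ) + 1) := by
  obtain ⟨m, rfl⟩ : ∃ m, n = m + 2 := ⟨n - 2, by omega⟩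
  have h1 : (harmonic (m + 2 - 1) : ℝ) ≤ 1 + Real.log (m + 1 : ℕ) :=
    harmonic_le_one_add_log _
  have hx : (1 : ℝ) ≤ ((m : ℝ) + 1) := by linarith [Nat.cast_nonneg (α := ℝ) m]
  set x : ℝ := (m : ℝ) + 1 with hxdef
  have hxpos : (0 : ℝ) < x := by positivity
  have hcast1 : ((m + 1 : ℕ) : ℝ) = x := by push_cast; ring
  have hcast2 : ((m + 2 : ℕ) : ℝ) + 1 = x + 2 := by push_cast; ring
  rw [hcast1] at h1
  rw [hcast2]
  have key : 2 + 2 * Real.log x ≤ 3 * Real.log (x + 2) := by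
    have hfrac : (0 : ℝ) < (x + 2) ^ 3 / x ^ 2 := by positivity
    have h8 : (8 : ℝ) ≤ (x + 2) ^ 3 / x ^ 2 := by
      rw [le_div_iff₀ (by positivity)]
      nlinarith
    have hlog8 : (2 : ℝ) ≤ Real.log ((x + 2) ^ 3 / x ^ 2) := by
      rw [Real.le_log_iff_exp_le hfrac]
      linarith [exp_two_lt_eight]
    have hsplit : Real.log ((x + 2) ^ 3 / x ^ 2)
        = 3 * Real.log (x + 2) - 2 * Real.log x := by
      rw [Real.log_div (by positivity) (by positivity), Real.log_pow, Real.log_pow]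
      push_cast; ring
    linarith [hsplit ▸ hlog8]
  linarith

private lemma S_le : ∀ k n : ℕ, 1 ≤ k → k ≤ n →
    S n k ≤ (3 * Real.log ((n : ℝ) + 1)) ^ (k - 1) / (n : ℝ) := by
  intro k
  induction k with
  | zero => intro n h; omega
  | succ k ih =>
    intro n _ hkn
    rcases Nat.eq_zero_or_pos k with rfl | hk
    · rw [S_one n (by omega)]
      simp
    · have hn2 : 2 ≤ n := by omega
      have hnpos : (0 : ℝ) < n := by exact_mod_cast (show 0 < n by omega)
      have hlog : 0 ≤ Real.log ((n : ℝ) + 1) := Real.log_nonneg (by linarith)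
      set C := 3 * Real.log ((n : ℝ) + 1) with hCdef
      have hC0 : 0 ≤ C := by positivity
      rw [S_rec]
      have step1 : ∀ j ∈ Finset.Ico 1 (n + 1),
          (1 / (j : ℝ)) * S (n - j) k
            ≤ (1 / (j : ℝ)) * (C ^ (k - 1) / ((n - j : ℕ) : ℝ)) := by
        intro j hj
        simp only [Finset.mem_Ico] at hj
        by_cases hcase : k ≤ n - j
        · refine mul_le_mul_of_nonneg_left ?_ (by positivity)
          calc S (n - j) k
              ≤ (3 * Real.log (((n - j : ℕ) : ℝ) + 1)) ^ (k - 1) / ((n - j : ℕ) : ℝ) :=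
                ih (n - j) hk hcase
            _ ≤ C ^ (k - 1) / ((n - j : ℕ) : ℝ) := by
                have h1 : (1 : ℝ) ≤ ((n - j : ℕ) : ℝ) := by exact_mod_cast (show 1 ≤ n - j by omega)
                have hle : ((n - j : ℕ) : ℝ) ≤ (n : ℝ) := by exact_mod_cast Nat.sub_le n j
                have hlog2 : Real.log (((n - j : ℕ) : ℝ) + 1) ≤ Real.log ((n : ℝ) + 1) :=
                  Real.log_le_log (by linarith) (by linarith)
                have hlog3 : 0 ≤ Real.log (((n - j : ℕ) : ℝ) + 1) := Real.log_nonneg (by linarith)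
                gcongr
                all_goals linarith
        · rw [S_eq_zero _ _ (by omega), mul_zero]
          positivity
      calc ∑ j ∈ Finset.Ico 1 (n + 1), (1 / (j : ℝ)) * S (n - j) k
          ≤ ∑ j ∈ Finset.Ico 1 (n + 1), (1 / (j : ℝ)) * (C ^ (k - 1) / ((n - j : ℕ) : ℝ)) :=
            Finset.sum_le_sum step1
        _ = ∑ j ∈ Finset.Ico 1 n, (1 / (j : ℝ)) * (C ^ (k - 1) / ((n - j : ℕ) : ℝ)) := by
            rw [Finset.sum_Ico_succ_top (by omega : 1 ≤ n)]
            simp [Nat.sub_self]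
        _ = ∑ j ∈ Finset.Ico 1 n,
              C ^ (k - 1) * ((1 / (n : ℝ)) * (1 / (j : ℝ) + 1 / ((n - j : ℕ) : ℝ))) := by
            refine Finset.sum_congr rfl fun j hj => ?_
            simp only [Finset.mem_Ico] at hj
            have hjpos : (0 : ℝ) < j := by exact_mod_cast hj.1
            have hdpos : (0 : ℝ) < ((n - j : ℕ) : ℝ) := by exact_mod_cast by omega
            have hsum : (j : ℝ) + ((n - j : ℕ) : ℝ) = (n : ℝ) := by
              push_cast [Nat.cast_sub (le_of_lt hj.2)]; ring
            have hjd : (1 : ℝ) / ((j : ℝ) * ((n - j : ℕ) : ℝ)) =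
                1 / (n : ℝ) * (1 / (j : ℝ) + 1 / ((n - j : ℕ) : ℝ)) := by
              field_simp
              linear_combination -hsum
            calc (1 / (j : ℝ)) * (C ^ (k - 1) / ((n - j : ℕ) : ℝ))
                = C ^ (k - 1) * ((1 : ℝ) / ((j : ℝ) * ((n - j : ℕ) : ℝ))) := by ring
              _ = _ := by rw [hjd]
        _ = C ^ (k - 1) * ((1 / (n : ℝ)) *
              (∑ j ∈ Finset.Ico 1 n, (1 : ℝ) / (j : ℝ)
                + ∑ j ∈ Finset.Ico 1 n, (1 : ℝ) / ((n - j : ℕ) : ℝ))) := by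
            rw [← Finset.mul_sum, ← Finset.mul_sum, ← Finset.sum_add_distrib]
        _ = C ^ (k - 1) * ((2 * (harmonic (n - 1) : ℝ)) / (n : ℝ)) := by
            rw [sum_Ico_inv_reflect, sum_Ico_inv_eq_harmonic n (by omega)]
            ring
        _ ≤ C ^ (k - 1) * (C / (n : ℝ)) := by
            gcongr
            exact two_harmonic_le n hn2
        _ = (3 * Real.log ((n : ℝ) + 1)) ^ (k + 1 - 1) / (n : ℝ) := by
            rw [← hCdef]
            rw [show k + 1 - 1 = (k - 1) + 1 by omega, pow_succ]
            ring

theorem reciprocal_sum_bound (n k : ℕ) (hk : 1 ≤ k) (hkn : k ≤ n) :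
    ∑ a ∈ (Finset.Nat.antidiagonalTuple k n).filter (fun a => ∀ i, 1 ≤ a i),
      ∏ i, (1 : ℝ) / (a i : ℝ)
      ≤ (3 * Real.log ((n : ℝ) + 1)) ^ (k - 1) / (n : ℝ) := by
  exact S_le k n hk hkn
end

section
/- (Gordan's lemma) Let A be an m×n real matrix. Then exactly one of the following holds: (i) there exists α ∈ ℝ^m such that every component of Aᵀα is strictly positive; (ii) there exists a nonzero β ∈ ℝ^n with all components nonpositive such that Aβ = 0. -/
theorem gordan_lemma (m n : ℕ) (hm : 1 ≤ m) (hn : 1 ≤ n) (A : Matrix (Fin m) (Fin n) ℝ) :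
    Xor'
      (∃ α : Fin m → ℝ, ∀ j, 0 < A.transpose.mulVec α j)
      (∃ β : Fin n → ℝ, β ≠ 0 ∧ (∀ j, β j ≤ 0) ∧ A.mulVec β = 0) := by
  classical
  set P := (∃ α : Fin m → ℝ, ∀ j, 0 < A.transpose.mulVec α j) with hPdef
  set Q := (∃ β : Fin n → ℝ, β ≠ 0 ∧ (∀ j, β j ≤ 0) ∧ A.mulVec β = 0) with hQdef
  have notboth : ¬ (P ∧ Q) := by
    rintro ⟨⟨α, hα⟩, ⟨β, hβ0, hβle, hAβ⟩⟩
    have key : dotProduct (A.transpose.mulVec α) β = 0 := by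
      rw [Matrix.mulVec_transpose, ← Matrix.dotProduct_mulVec, hAβ, dotProduct_zero]
    obtain ⟨j0, hj0⟩ : ∃ j, β j < 0 := by
      by_contra h
      push_neg at h
      exact hβ0 (funext fun j => le_antisymm (hβle j) (h j))
    have hlt : dotProduct (A.transpose.mulVec α) β < 0 := by
      have : ∑ j, A.transpose.mulVec α j * β j < ∑ j : Fin n, (0 : ℝ) := by
        apply Finset.sum_lt_sum
        · intro j _
          exact mul_nonpos_of_nonneg_of_nonpos (hα j).le (hβle j)
        · exact ⟨j0, Finset.mem_univ _, mul_neg_of_pos_of_neg (hα j0) hj0⟩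
      simpa [dotProduct] using this
    rw [key] at hlt
    exact lt_irrefl _ hlt
  by_cases hP : P
  · exact Or.inl ⟨hP, fun hQ => notboth ⟨hP, hQ⟩⟩
  · refine Or.inr ⟨?_, hP⟩
    -- the columns of Aᵀ
    set a : Fin n → (Fin m → ℝ) := fun j i => A i j with ha
    by_cases h0 : (0 : Fin m → ℝ) ∈ convexHull ℝ (Set.range a)
    · rw [convexHull_range_eq_exists_affineCombination] at h0
      obtain ⟨s, w, hw0, hw1, hcomb⟩ := h0
      rw [Finset.affineCombination_eq_linear_combination s a w hw1] at hcomb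
      set β : Fin n → ℝ := fun j => if j ∈ s then -(w j) else 0 with hβ
      refine ⟨β, ?_, ?_, ?_⟩
      · intro h
        have : ∑ j ∈ s, w j = 0 := by
          apply Finset.sum_eq_zero
          intro j hj
          have := congrFun h j
          simp only [hβ, hj, if_pos, Pi.zero_apply, neg_eq_zero] at this
          exact this
        rw [hw1] at this; exact one_ne_zero this
      · intro j
        by_cases hj : j ∈ s
        · simp [hβ, hj, neg_nonpos, hw0 j hj]
        · simp [hβ, hj]
      · funext i
        have := congrFun hcomb i
        simp only [Finset.sum_apply, Pi.smul_apply, smul_eq_mul, Pi.zero_apply] at this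
        have hsum : ∑ j, A i j * β j = ∑ j ∈ s, -(w j * a j i) := by
          rw [← Finset.sum_subset (Finset.subset_univ s)
            (fun j _ hj => by simp [hβ, hj])]
          apply Finset.sum_congr rfl
          intro j hj
          simp [hβ, hj, ha, mul_comm]
        show A.mulVec β i = 0
        simp only [Matrix.mulVec, dotProduct]
        rw [hsum, Finset.sum_neg_distrib, this, neg_zero]
    · exfalso
      apply hP
      have hKconv : Convex ℝ (convexHull ℝ (Set.range a)) := convex_convexHull ℝ _
      have hKcl : IsClosed (convexHull ℝ (Set.range a)) :=
        ((Set.finite_range a).isCompact_convexHull ℝ).isClosed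
      obtain ⟨f, u, hfu, hK⟩ := geometric_hahn_banach_point_closed hKconv hKcl h0
      have hu : 0 < u := by simpa using hfu
      refine ⟨fun i => f ((fun k => if i = k then (1:ℝ) else 0)), fun j => ?_⟩
      have haj : a j ∈ convexHull ℝ (Set.range a) :=
        subset_convexHull ℝ _ (Set.mem_range_self j)
      have hfa : u < f (a j) := hK _ haj
      have hrepr : f (a j) = ∑ i, A i j * f ((fun k => if i = k then (1:ℝ) else 0)) := by
        conv_lhs => rw [pi_eq_sum_univ (a j)]
        rw [map_sum]
        apply Finset.sum_congr rfl
        intro i _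
        rw [map_smul, smul_eq_mul, ha]
      have : A.transpose.mulVec (fun i => f ((fun k => if i = k then (1:ℝ) else 0))) j
          = ∑ i, A i j * f ((fun k => if i = k then (1:ℝ) else 0)) := by
        simp [Matrix.mulVec, dotProduct, Matrix.transpose_apply]
      rw [this, ← hrepr]
      exact lt_trans hu hfa
end

section
/- Let Q be a real n×n skew-symmetric matrix. Then either there exists a vector α ∈ ℝ^n with all components of Qα strictly negative, or there exists a nonzero vector β ∈ ℝ^n with all components nonpositive and Qβ = 0. -/
theorem skew_symmetric_gordan (n : ℕ) (Q : Matrix (Fin n) (Fin n) ℝ)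
    (hQ : Q.transpose = -Q) :
    (∃ α : Fin n → ℝ, ∀ i, Q.mulVec α i < 0) ∨
      (∃ β : Fin n → ℝ, β ≠ 0 ∧ (∀ i, β i ≤ 0) ∧ Q.mulVec β = 0) := by
  by_cases h : ∃ α : Fin n → ℝ, ∀ i, Q.mulVec α i < 0
  · exact Or.inl h
  right
  -- s : open negative orthant, t : range of mulVec
  set s : Set (Fin n → ℝ) := Set.univ.pi fun _ => Set.Iio (0 : ℝ) with hs_def
  set t : Set (Fin n → ℝ) := Set.range Q.mulVec with ht_def
  have hs_mem : ∀ x : Fin n → ℝ, x ∈ s ↔ ∀ i, x i < 0 := by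
    intro x
    simp [hs_def, Set.mem_pi]
  have hs_conv : Convex ℝ s := convex_pi fun i _ => convex_Iio 0
  have hs_open : IsOpen s := isOpen_set_pi Set.finite_univ fun i _ => isOpen_Iio
  have ht_conv : Convex ℝ t := by
    have : t = ↑(LinearMap.range (Matrix.mulVecLin Q)) := by
      ext x
      simp [ht_def, LinearMap.mem_range, Matrix.mulVecLin_apply]
    rw [this]
    exact (LinearMap.range (Matrix.mulVecLin Q)).convex
  have hdisj : Disjoint s t := by
    rw [Set.disjoint_left]
    intro x hxs hxt
    obtain ⟨α, rfl⟩ := hxt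
    exact h ⟨α, fun i => (hs_mem _).1 hxs i⟩
  obtain ⟨f, u, hfs, hft⟩ := geometric_hahn_banach_open hs_conv hs_open ht_conv hdisj
  -- u ≤ 0 since 0 ∈ t
  have h0t : (0 : Fin n → ℝ) ∈ t := ⟨0, Matrix.mulVec_zero Q⟩
  have hu0 : u ≤ 0 := by simpa using hft 0 h0t
  -- f vanishes on t
  have hft0 : ∀ α : Fin n → ℝ, f (Q.mulVec α) = 0 := by
    intro α
    by_contra hne
    have key : ∀ c : ℝ, u ≤ c * f (Q.mulVec α) := by
      intro c
      have : Q.mulVec (c • α) ∈ t := ⟨c • α, rfl⟩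
      have := hft _ this
      rwa [Matrix.mulVec_smul, map_smul, smul_eq_mul] at this
    have := key ((u - 1) / f (Q.mulVec α))
    rw [div_mul_cancel₀ _ hne] at this
    linarith
  -- the representing vector
  set y : Fin n → ℝ := fun i => f (Pi.single i 1) with hy_def
  have hrep : ∀ x : Fin n → ℝ, f x = ∑ i, x i * y i := by
    intro x
    conv_lhs => rw [← Finset.univ_sum_single x]
    rw [map_sum]
    refine Finset.sum_congr rfl fun i _ => ?_
    have : Pi.single i (x i) = x i • (Pi.single i 1 : Fin n → ℝ) := by
      rw [← Pi.single_smul, smul_eq_mul, mul_one]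
    rw [this, map_smul, smul_eq_mul]
  -- components of y are nonnegative
  have hy_nonneg : ∀ i, 0 ≤ y i := by
    intro i
    by_contra hyi
    push_neg at hyi
    set c : Fin n → ℝ := fun _ => (-1 : ℝ) with hc_def
    set M : ℝ := max 0 ((u - f c) / (-y i)) with hM_def
    have hM0 : 0 ≤ M := le_max_left _ _
    have hx : (c + M • (Pi.single i (-1) : Fin n → ℝ)) ∈ s := by
      rw [hs_mem]
      intro j
      by_cases hji : j = i
      · subst hji
        simp [hc_def]
        linarith
      · simp [hc_def, Pi.single_eq_of_ne hji]
    have hlt := hfs _ hx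
    rw [map_add, map_smul, smul_eq_mul] at hlt
    have hsingle : f (Pi.single i (-1 : ℝ)) = -y i := by
      have : Pi.single i (-1 : ℝ) = (-1 : ℝ) • (Pi.single i 1 : Fin n → ℝ) := by
        rw [← Pi.single_smul, smul_eq_mul, mul_one]
      rw [this, map_smul, smul_eq_mul, hy_def]
      ring
    rw [hsingle] at hlt
    have hMy : (u - f c) ≤ M * (-y i) := by
      have h1 : (u - f c) / (-y i) ≤ M := le_max_right _ _
      have h2 : (0 : ℝ) < -y i := by linarith
      calc u - f c = ((u - f c) / (-y i)) * (-y i) :=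
            (div_mul_cancel₀ _ (ne_of_gt h2)).symm
        _ ≤ M * (-y i) := by
            exact mul_le_mul_of_nonneg_right h1 (le_of_lt h2)
    linarith
  -- y ≠ 0
  have hy_ne : y ≠ 0 := by
    intro hy0
    have hx : (fun _ => (-1 : ℝ)) ∈ s := by
      rw [hs_mem]; intro j; norm_num
    have hlt := hfs _ hx
    rw [hrep, hy0] at hlt
    simp at hlt
    linarith
  -- Qᵀ y = 0, hence Q y = 0 by skew-symmetry
  have hQy : Q.mulVec y = 0 := by
    have hQt : Q.transpose.mulVec y = 0 := by
      funext j
      have := hft0 (Pi.single j 1)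
      rw [hrep] at this
      have hmv : ∀ i, Q.mulVec (Pi.single j 1) i = Q i j := by
        intro i
        simp [Matrix.mulVec, dotProduct, Pi.single_apply]
      calc Q.transpose.mulVec y j = ∑ i, Q i j * y i := by
            simp [Matrix.mulVec, dotProduct, Matrix.transpose_apply]
        _ = ∑ i, Q.mulVec (Pi.single j 1) i * y i := by
            refine Finset.sum_congr rfl fun i _ => by rw [hmv i]
        _ = 0 := this
    have : (-Q).mulVec y = 0 := by rw [← hQ]; exact hQt
    rw [Matrix.neg_mulVec, neg_eq_zero] at this
    exact this
  refine ⟨-y, ?_, ?_, ?_⟩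
  · simpa using hy_ne
  · intro i; simpa using hy_nonneg i
  · rw [Matrix.mulVec_neg, hQy, neg_zero]
end

section
/- Let S be a finite set, b : S × S → [0,∞) a jump rate kernel, and let S_0 be the set of recurrent states of the continuous-time Markov chain with rate b(x,y) = max(r(x,y) - r(y,x), 0) arising from a rate kernel r : S × S → [0,∞). Then S_0 is semi-attracting: for all x ∈ S_0 and y ∉ S_0 with r(x,y) + r(y,x) > 0, one has r(x,y) ≤ r(y,x). -/
open Finset

theorem recurrent_set_is_semi_attracting
    (S : Type*) [Fintype S]
    (r : S → S → ℝ) (hr : ∀ x y, 0 ≤ r x y)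
    (b : S → S → ℝ) (hb : ∀ x y, b x y = max (r x y - r y x) 0)
    (S₀ : Set S)
    (hS₀ : ∀ x, x ∈ S₀ ↔ ∃ π : S → ℝ, (∀ z, 0 ≤ π z) ∧ (∑ z, π z = 1) ∧
      (∀ z, ∑ w, π z * b z w = ∑ w, π w * b w z) ∧ 0 < π x) :
    ∀ x ∈ S₀, ∀ y ∉ S₀, 0 < r x y + r y x → r x y ≤ r y x := by
  intro x hx y hy _
  obtain ⟨π, hπ0, hπs, hinv, hπx⟩ := (hS₀ x).1 hx
  have hπy : π y = 0 := by
    by_contra h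
    exact hy ((hS₀ y).2 ⟨π, hπ0, hπs, hinv, lt_of_le_of_ne (hπ0 y) (Ne.symm h)⟩)
  have hsum : ∑ w, π w * b w y = 0 := by
    rw [← hinv y]
    simp [hπy]
  have hterm : π x * b x y = 0 :=
    (Finset.sum_eq_zero_iff_of_nonneg (fun w _ =>
      mul_nonneg (hπ0 w) (by rw [hb]; exact le_max_right _ _))).1 hsum x (mem_univ x)
  have hbxy : b x y = 0 := by
    rcases mul_eq_zero.1 hterm with h | h
    · exact absurd h (ne_of_gt hπx)
    · exact h
  have h1 : r x y - r y x ≤ 0 := by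
    rw [hb] at hbxy
    calc r x y - r y x ≤ max (r x y - r y x) 0 := le_max_left _ _
    _ = 0 := hbxy
  linarith
end

section
/- Consider the inclusion process generator on configurations η ∈ ℕ^S with Σ_x η_x = N, where a particle jumps from x to y at rate η_x(d_N + η_y)r(x,y). If the invariant measure m of the underlying random walk with rates r is the uniform measure on S (i.e., Σ_x r(x,y) = Σ_x r(y,x) for all y ∈ S), then the product measure μ_N(η) = (1/Z_N)∏_{x∈S} w_N(η_x), with w_N(n) = Γ(n+d_N)/(n!·Γ(d_N)), is invariant for the inclusion process. -/
open Finset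

/-- `move η y x` is the configuration obtained from `η` by moving one particle
from site `y` to site `x` (for `x = y` it returns `η`). -/
def move {S : Type*} [DecidableEq S] (η : S → ℕ) (y x : S) : S → ℕ :=
  Function.update (Function.update η y (η y - 1)) x
    ((Function.update η y (η y - 1)) x + 1)

theorem product_measure_invariant_under_UI
    (S : Type*) [Fintype S] [DecidableEq S]
    (r : S → S → ℝ) (hr : ∀ x y, 0 ≤ r x y) (hrd : ∀ x, r x x = 0)
    (hUI : ∀ y, ∑ x, r x y = ∑ x, r y x)
    (N : ℕ) (d : ℝ) (hd : 0 < d)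
    (Z : ℝ) (hZ : 0 < Z)
    (μ : (S → ℕ) → ℝ)
    (hμ : ∀ η : S → ℕ, μ η =
      (1 / Z) * ∏ x, Real.Gamma ((η x : ℝ) + d) / ((η x).factorial * Real.Gamma d)) :
    ∀ η : S → ℕ, (∑ x, η x = N) →
      (∑ x, ∑ y, if 1 ≤ η y then
          μ (move η y x) * ((η x : ℝ) + 1) * (d + (η y : ℝ) - 1) * r x y
        else 0)
      = μ η * ∑ x, ∑ y, (η y : ℝ) * (d + (η x : ℝ)) * r y x := by
  intro η hN
  have hΓd : 0 < Real.Gamma d := Real.Gamma_pos_of_pos hd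
  set w : ℕ → ℝ := fun n => Real.Gamma ((n : ℝ) + d) / ((n.factorial : ℝ) * Real.Gamma d)
    with hw
  have hrec : ∀ n : ℕ, w (n + 1) * ((n : ℝ) + 1) = w n * (d + n) := by
    intro n
    have h1 : Real.Gamma (((n : ℝ) + 1) + d) = ((n : ℝ) + d) * Real.Gamma ((n : ℝ) + d) := by
      rw [show ((n : ℝ) + 1) + d = ((n : ℝ) + d) + 1 by ring]
      exact Real.Gamma_add_one (by positivity)
    have hfac : (0 : ℝ) < (n.factorial : ℝ) := by exact_mod_cast Nat.factorial_pos n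
    simp only [hw]
    push_cast [Nat.factorial_succ]
    rw [h1]
    field_simp
    ring
  -- the key product identity
  have key : ∀ x y : S, x ≠ y → 1 ≤ η y →
      (∏ z, w (move η y x z)) * (((η x : ℝ) + 1) * (d + (η y : ℝ) - 1))
      = (∏ z, w (η z)) * ((η y : ℝ) * (d + (η x : ℝ))) := by
    intro x y hxy hy
    have hmx : move η y x x = η x + 1 := by
      simp [move, Function.update_self, Function.update_of_ne hxy]
    have hmy : move η y x y = η y - 1 := by
      simp [move, Function.update_of_ne (Ne.symm hxy), Function.update_self]
    have hmz : ∀ z, z ≠ x → z ≠ y → move η y x z = η z := by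
      intro z hzx hzy
      simp [move, Function.update_of_ne hzx, Function.update_of_ne hzy]
    have hy' : y ∈ (univ : Finset S).erase x := by
      simp [Ne.symm hxy]
    have hsplit : ∀ f : S → ℝ, ∏ z, f z = f x * (f y * ∏ z ∈ ((univ : Finset S).erase x).erase y, f z) := by
      intro f
      rw [← Finset.mul_prod_erase _ f (mem_univ x), ← Finset.mul_prod_erase _ f hy']
    rw [hsplit (fun z => w (move η y x z)), hsplit (fun z => w (η z))]
    have hP : ∏ z ∈ ((univ : Finset S).erase x).erase y, w (move η y x z)
        = ∏ z ∈ ((univ : Finset S).erase x).erase y, w (η z) := by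
      refine Finset.prod_congr rfl fun z hz => ?_
      simp only [mem_erase] at hz
      rw [hmz z hz.2.1 hz.1]
    rw [hmx, hmy, hP]
    set P := ∏ z ∈ ((univ : Finset S).erase x).erase y, w (η z)
    have h1 := hrec (η x)
    have h2 := hrec (η y - 1)
    rw [Nat.sub_add_cancel hy] at h2
    have hcast : ((η y - 1 : ℕ) : ℝ) = (η y : ℝ) - 1 := by
      push_cast [Nat.cast_sub hy]; ring
    rw [hcast] at h2
    have h2' : w (η y) * (η y : ℝ) = w (η y - 1) * (d + ((η y : ℝ) - 1)) := by
      rw [← h2]; ring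
    have hcomb : w (η x + 1) * ((η x : ℝ) + 1) * (w (η y - 1) * (d + (η y : ℝ) - 1))
        = w (η x) * (d + (η x : ℝ)) * (w (η y) * (η y : ℝ)) := by
      rw [h1, h2']; ring
    linear_combination P * hcomb
  -- each term of the LHS equals μ η * (η y * (d + η x) * r x y)
  have hterm : ∀ x y : S,
      (if 1 ≤ η y then μ (move η y x) * ((η x : ℝ) + 1) * (d + (η y : ℝ) - 1) * r x y else 0)
      = μ η * ((η y : ℝ) * (d + (η x : ℝ)) * r x y) := by
    intro x y
    by_cases hy : 1 ≤ η y
    · rw [if_pos hy]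
      by_cases hxy : x = y
      · subst hxy
        simp [hrd x]
      · rw [hμ, hμ]
        have := key x y hxy hy
        simp only [hw] at this ⊢
        linear_combination (r x y / Z) * this
    · rw [if_neg hy]
      have h0 : η y = 0 := by omega
      simp [h0]
  calc (∑ x, ∑ y, if 1 ≤ η y then
          μ (move η y x) * ((η x : ℝ) + 1) * (d + (η y : ℝ) - 1) * r x y else 0)
      = ∑ x, ∑ y, μ η * ((η y : ℝ) * (d + (η x : ℝ)) * r x y) := by
        refine Finset.sum_congr rfl fun x _ => Finset.sum_congr rfl fun y _ => hterm x y
    _ = μ η * ∑ x, ∑ y, (η y : ℝ) * (d + (η x : ℝ)) * r x y := by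
        rw [Finset.mul_sum]
        refine Finset.sum_congr rfl fun x _ => ?_
        rw [Finset.mul_sum]
    _ = μ η * ∑ x, ∑ y, (η y : ℝ) * (d + (η x : ℝ)) * r y x := by
        congr 1
        have e1 : ∀ f : S → S → ℝ, (∑ x, ∑ y, (η y : ℝ) * (d + (η x : ℝ)) * f x y)
            = (∑ x, ∑ y, d * (η y : ℝ) * f x y) + ∑ x, ∑ y, (η y : ℝ) * (η x : ℝ) * f x y := by
          intro f
          rw [← Finset.sum_add_distrib]
          refine Finset.sum_congr rfl fun x _ => ?_
          rw [← Finset.sum_add_distrib]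
          exact Finset.sum_congr rfl fun y _ => by ring
        rw [e1 r, e1 (fun a b => r b a)]
        congr 1
        · calc (∑ x, ∑ y, d * (η y : ℝ) * r x y)
              = ∑ y, ∑ x, d * (η y : ℝ) * r x y := Finset.sum_comm
            _ = ∑ y, ∑ x, d * (η y : ℝ) * r y x := by
                refine Finset.sum_congr rfl fun y _ => ?_
                rw [← Finset.mul_sum, hUI y, Finset.mul_sum]
            _ = ∑ x, ∑ y, d * (η y : ℝ) * r y x := Finset.sum_comm
        · rw [Finset.sum_comm]
          refine Finset.sum_congr rfl fun x _ => Finset.sum_congr rfl fun y _ => by ring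
end

section
/- Let q ∈ (0,1) and let (b_i)_{i=1}^N be real numbers satisfying |b_{i+1} - q·b_i| ≤ C·N/(i(N-i)) for 1 ≤ i ≤ N-1. Then |Σ_{i=1}^N b_i - b_1·(1-q^N)/(1-q)| ≤ C'·log N, where C' depends only on C and q. -/
open Finset

private lemma tele_aux (q : ℝ) (hq : 0 ≤ q) (b e : ℕ → ℝ) (N : ℕ)
    (hb : ∀ i : ℕ, 1 ≤ i → i ≤ N - 1 → |b (i + 1) - q * b i| ≤ e i) :
    ∀ i : ℕ, 1 ≤ i → i ≤ N →
      |b i - q ^ (i - 1) * b 1| ≤ ∑ j ∈ Icc 1 (i - 1), q ^ (i - 1 - j) * e j := by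
  intro i hi1
  induction i, hi1 using Nat.le_induction with
  | base => intro _; simp
  | succ n hn ih =>
    intro hnN
    have hnN' : n ≤ N := le_trans (Nat.le_succ n) hnN
    have hn1 : n ≤ N - 1 := by omega
    obtain ⟨m, rfl⟩ : ∃ m, n = m + 1 := ⟨n - 1, by omega⟩
    have h1 := hb (m + 1) (by omega) hn1
    have h2 := ih hnN'
    simp only [Nat.add_sub_cancel] at h2 ⊢
    have key : b (m + 1 + 1) - q ^ (m + 1) * b 1
        = (b (m + 1 + 1) - q * b (m + 1)) + q * (b (m + 1) - q ^ m * b 1) := by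
      ring
    calc |b (m + 1 + 1) - q ^ (m + 1) * b 1|
        ≤ |b (m + 1 + 1) - q * b (m + 1)| + |q * (b (m + 1) - q ^ m * b 1)| := by
          rw [key]; exact abs_add_le _ _
      _ ≤ e (m + 1) + q * ∑ j ∈ Icc 1 m, q ^ (m - j) * e j := by
          rw [abs_mul, abs_of_nonneg hq]
          exact add_le_add h1 (mul_le_mul_of_nonneg_left h2 hq)
      _ = e (m + 1) + ∑ j ∈ Icc 1 m, q ^ (m + 1 - j) * e j := by
          rw [Finset.mul_sum]
          congr 1
          refine Finset.sum_congr rfl fun j hj => ?_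
          simp only [mem_Icc] at hj
          rw [show m + 1 - j = (m - j) + 1 by omega, pow_succ]
          ring
      _ = ∑ j ∈ Icc 1 (m + 1), q ^ (m + 1 - j) * e j := by
          rw [Finset.sum_Icc_succ_top (by omega : 1 ≤ m + 1)]
          simp [Nat.sub_self]
          ring

private lemma geo_aux {q : ℝ} (hq0 : 0 < q) (hq1 : q < 1) (t : ℕ) :
    ∑ k ∈ range t, q ^ k ≤ 1 / (1 - q) := by
  rw [geom_sum_eq (ne_of_lt hq1)]
  have h : (q ^ t - 1) / (q - 1) = (1 - q ^ t) / (1 - q) := by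
    rw [div_eq_div_iff (by linarith) (by linarith)]; ring
  rw [h]
  have hqt : 0 ≤ q ^ t := le_of_lt (pow_pos hq0 t)
  gcongr
  · linarith

theorem telescoping_geometric_estimate (C q : ℝ) (hC : 0 ≤ C) (hq0 : 0 < q) (hq1 : q < 1) :
    ∃ C' : ℝ, ∀ N : ℕ, ∀ b : ℕ → ℝ,
      (∀ i : ℕ, 1 ≤ i → i ≤ N - 1 →
        |b (i + 1) - q * b i| ≤ C * (N : ℝ) / ((i : ℝ) * ((N : ℝ) - (i : ℝ)))) →
      |(∑ i ∈ Finset.Icc 1 N, b i) - b 1 * (1 - q ^ N) / (1 - q)|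
        ≤ C' * Real.log (N : ℝ) := by
  have h1q : (0:ℝ) < 1 - q := by linarith
  have hlog2 : 0 < Real.log 2 := Real.log_pos (by norm_num)
  refine ⟨C / (1 - q) * 2 * (1 / Real.log 2 + 1), ?_⟩
  intro N b hb
  rcases Nat.lt_or_ge N 2 with hN | hN
  · interval_cases N
    · simp
    · rw [Finset.Icc_self, Finset.sum_singleton]
      have h : b 1 * (1 - q ^ 1) / (1 - q) = b 1 := by
        rw [pow_one]; field_simp
      rw [h, sub_self, abs_zero, Nat.cast_one, Real.log_one, mul_zero]
  -- main case: N ≥ 2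
  have hN0 : (0:ℝ) < N := by exact_mod_cast Nat.lt_of_lt_of_le (by norm_num) hN
  set e : ℕ → ℝ := fun j => C * (N : ℝ) / ((j : ℝ) * ((N : ℝ) - (j : ℝ))) with he_def
  have hbe : ∀ i : ℕ, 1 ≤ i → i ≤ N - 1 → |b (i + 1) - q * b i| ≤ e i := hb
  have tele := tele_aux q (le_of_lt hq0) b e N hbe
  -- e j rewritten
  have heq : ∀ j ∈ Icc 1 (N - 1), e j = C * ((j:ℝ)⁻¹ + (((N - j : ℕ)):ℝ)⁻¹) := by
    intro j hj
    simp only [mem_Icc] at hj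
    have hjN : j < N := by omega
    have h1 : (1:ℝ) ≤ (j:ℝ) := by exact_mod_cast hj.1
    have h2 : (j:ℝ) < (N:ℝ) := by exact_mod_cast hjN
    have hcast : (((N - j : ℕ)):ℝ) = (N:ℝ) - (j:ℝ) := by
      push_cast [Nat.cast_sub (le_of_lt hjN)]; ring
    rw [he_def, hcast]
    have hj0 : (j:ℝ) ≠ 0 := by linarith
    have hNj : (N:ℝ) - (j:ℝ) ≠ 0 := by linarith
    field_simp
    ring
  have he_nonneg : ∀ j ∈ Icc 1 (N - 1), 0 ≤ e j := by
    intro j hj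
    simp only [mem_Icc] at hj
    have hjN : j < N := by omega
    have h1 : (1:ℝ) ≤ (j:ℝ) := by exact_mod_cast hj.1
    have h2 : (j:ℝ) < (N:ℝ) := by exact_mod_cast hjN
    rw [he_def]
    have : (0:ℝ) < (j:ℝ) * ((N:ℝ) - (j:ℝ)) := by nlinarith
    positivity
  -- Step B : rewrite difference as a sum
  have hgeo_sum : ∑ i ∈ Icc 1 N, q ^ (i - 1) = (1 - q ^ N) / (1 - q) := by
    rw [← Finset.Ico_add_one_right_eq_Icc, Finset.sum_Ico_eq_sum_range]
    have : ∀ k ∈ range (N + 1 - 1), q ^ (1 + k - 1) = q ^ k := by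
      intro k _; congr 1; omega
    rw [Finset.sum_congr rfl this, show N + 1 - 1 = N from rfl,
      geom_sum_eq (ne_of_lt hq1), div_eq_div_iff (by linarith) (by linarith)]
    ring
  have hsplit : (∑ i ∈ Icc 1 N, b i) - b 1 * (1 - q ^ N) / (1 - q)
      = ∑ i ∈ Icc 1 N, (b i - q ^ (i - 1) * b 1) := by
    rw [Finset.sum_sub_distrib, ← Finset.sum_mul, hgeo_sum]
    ring
  rw [hsplit]
  -- harmonic bound
  have hharm : ∑ j ∈ Icc 1 (N - 1), ((j:ℝ))⁻¹ ≤ 1 + Real.log ((N - 1 : ℕ) : ℝ) := by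
    have h := harmonic_le_one_add_log (N - 1)
    rw [harmonic_eq_sum_Icc] at h
    push_cast at h
    exact h
  have hlogN1 : Real.log ((N - 1 : ℕ) : ℝ) ≤ Real.log (N : ℝ) := by
    apply Real.log_le_log
    · have : (1:ℕ) ≤ N - 1 := by omega
      exact_mod_cast Nat.lt_of_lt_of_le (by norm_num) this
    · exact_mod_cast Nat.sub_le N 1
  have hlogN2 : Real.log 2 ≤ Real.log (N : ℝ) := by
    apply Real.log_le_log (by norm_num)
    exact_mod_cast hN
  have hlogN0 : 0 < Real.log (N : ℝ) := lt_of_lt_of_le hlog2 hlogN2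
  -- reflection
  have hrefl : ∑ j ∈ Icc 1 (N - 1), (((N - j : ℕ)):ℝ)⁻¹
      = ∑ j ∈ Icc 1 (N - 1), ((j:ℝ))⁻¹ := by
    rw [show Icc 1 (N - 1) = Ico 1 N from by
      rw [← Finset.Ico_add_one_right_eq_Icc]; congr 1; omega]
    rw [Finset.sum_Ico_eq_sum_range, Finset.sum_Ico_eq_sum_range,
      ← Finset.sum_range_reflect]
    refine Finset.sum_congr rfl fun k hk => ?_
    simp only [Finset.mem_range] at hk
    congr 2
    omega
  calc |∑ i ∈ Icc 1 N, (b i - q ^ (i - 1) * b 1)|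
      ≤ ∑ i ∈ Icc 1 N, |b i - q ^ (i - 1) * b 1| := Finset.abs_sum_le_sum_abs _ _
    _ ≤ ∑ i ∈ Icc 1 N, ∑ j ∈ Icc 1 (i - 1), q ^ (i - 1 - j) * e j := by
        refine Finset.sum_le_sum fun i hi => ?_
        simp only [mem_Icc] at hi
        exact tele i hi.1 hi.2
    _ = ∑ j ∈ Icc 1 (N - 1), ∑ i ∈ Icc (j + 1) N, q ^ (i - 1 - j) * e j :=
        Finset.sum_comm' (fun i j => by simp only [mem_Icc]; omega)
    _ ≤ ∑ j ∈ Icc 1 (N - 1), 1 / (1 - q) * e j := by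
        refine Finset.sum_le_sum fun j hj => ?_
        have hinner : ∑ i ∈ Icc (j + 1) N, q ^ (i - 1 - j) ≤ 1 / (1 - q) := by
          rw [← Finset.Ico_add_one_right_eq_Icc, Finset.sum_Ico_eq_sum_range]
          have : ∀ k ∈ range (N + 1 - (j + 1)), q ^ (j + 1 + k - 1 - j) = q ^ k := by
            intro k _; congr 1; omega
          rw [Finset.sum_congr rfl this]
          exact geo_aux hq0 hq1 _
        calc ∑ i ∈ Icc (j + 1) N, q ^ (i - 1 - j) * e j
            = (∑ i ∈ Icc (j + 1) N, q ^ (i - 1 - j)) * e j := by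
              rw [Finset.sum_mul]
          _ ≤ 1 / (1 - q) * e j :=
              mul_le_mul_of_nonneg_right hinner (he_nonneg j hj)
    _ = 1 / (1 - q) * ∑ j ∈ Icc 1 (N - 1), e j := by rw [Finset.mul_sum]
    _ = 1 / (1 - q) * (C * (2 * ∑ j ∈ Icc 1 (N - 1), ((j:ℝ))⁻¹)) := by
        rw [Finset.sum_congr rfl heq, ← Finset.mul_sum, Finset.sum_add_distrib, hrefl]
        ring
    _ ≤ 1 / (1 - q) * (C * (2 * (1 + Real.log (N : ℝ)))) := by
        have h1 : ∑ j ∈ Icc 1 (N - 1), ((j:ℝ))⁻¹ ≤ 1 + Real.log (N : ℝ) :=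
          le_trans hharm (by linarith)
        have h0 : (0:ℝ) ≤ 1 / (1 - q) := by positivity
        have h2 : C * (2 * ∑ j ∈ Icc 1 (N - 1), ((j:ℝ))⁻¹)
            ≤ C * (2 * (1 + Real.log (N : ℝ))) := by
          apply mul_le_mul_of_nonneg_left _ hC
          linarith
        exact mul_le_mul_of_nonneg_left h2 h0
    _ ≤ C / (1 - q) * 2 * (1 / Real.log 2 + 1) * Real.log (N : ℝ) := by
        have hkey : 1 + Real.log (N : ℝ) ≤ (1 / Real.log 2 + 1) * Real.log (N : ℝ) := by
          have h1 : (1:ℝ) ≤ Real.log (N : ℝ) / Real.log 2 :=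
            (one_le_div hlog2).mpr hlogN2
          have h2 : (1 / Real.log 2 + 1) * Real.log (N : ℝ)
              = Real.log (N : ℝ) / Real.log 2 + Real.log (N : ℝ) := by
            field_simp
          rw [h2]; linarith
        have h0 : (0:ℝ) ≤ C / (1 - q) * 2 := by positivity
        calc 1 / (1 - q) * (C * (2 * (1 + Real.log (N : ℝ))))
            = C / (1 - q) * 2 * (1 + Real.log (N : ℝ)) := by ring
          _ ≤ C / (1 - q) * 2 * ((1 / Real.log 2 + 1) * Real.log (N : ℝ)) :=
              mul_le_mul_of_nonneg_left hkey h0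
          _ = C / (1 - q) * 2 * (1 / Real.log 2 + 1) * Real.log (N : ℝ) := by ring
end
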